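/- Fix α > 2. Then g_α(s) ≥ 0 for every s ∈ [0,1], the function s ↦ √(g_α(s)) is strictly concave on [0,1], and consequently, for every a ∈ ℝ and b > 0, the function s ↦ a·s + b·√(g_α(s)) is strictly concave on [0,1]. -/

import Mathlib

open Real

noncomputable section

def calpha (α : ℝ) : ℝ := 1 / Real.tan (π / α)

def ralpha (α s : ℝ) : ℝ := Real.sqrt (calpha α ^ 2 + 1 - s ^ 2) - calpha α

def galpha (α s : ℝ) : ℝ :=
  -1 - s ^ 2 + (2 * α / π) * ralpha α s
    + (2 * α * s / π) * Real.arctan (s / (ralpha α s + calpha α))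

/-!
Write `R = √(c_α² + 1 - s²) = r_α + c_α`. Then `g' = -2s + (2α/π) arctan(s/R)`,
`g'' = -2 + (2α/π)/R` and `g''' = (2α/π) s/R³ > 0` on `(0, 1]`. Since `arctan(1/c_α) = π/α`,
`g(1) = g'(1) = 0`, and `g'(0) = 0`; so the strictly convex `g'` is negative on `(0, 1)`, and
`g` decreases to `g(1) = 0`. The defect `D = g'² - 2 g g''` has `D' = -2 g g''' < 0` and
`D(1) = 0`, so `D > 0` on `[0, 1)`, and `(√g)'' = -D / (4 g^{3/2}) < 0`.
-/

open Set Filter Topology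

theorem StrictConcaveOn.const_mul {s : Set ℝ} {f : ℝ → ℝ} {b : ℝ} (hf : StrictConcaveOn ℝ s f)
    (hb : 0 < b) : StrictConcaveOn ℝ s fun x => b * f x :=
  ⟨hf.1, fun x hx y hy hxy p q hp hq hpq => by
    have h := mul_lt_mul_of_pos_left (hf.2 hx hy hxy hp hq hpq) hb
    simp only [smul_eq_mul] at h ⊢
    linarith⟩

theorem strictConcaveOn_sqrt_of_hasDerivAt {D : Set ℝ} (hD : Convex ℝ D) {f f' f'' : ℝ → ℝ}
    (hf : ContinuousOn f D) (hf' : ∀ x ∈ interior D, HasDerivAt f (f' x) x)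
    (hf'' : ∀ x ∈ interior D, HasDerivAt f' (f'' x) x) (hpos : ∀ x ∈ interior D, 0 < f x)
    (hdefect : ∀ x ∈ interior D, 2 * f x * f'' x < f' x ^ 2) :
    StrictConcaveOn ℝ D fun x => √(f x) := by
  refine strictConcaveOn_of_deriv2_neg hD (continuous_sqrt.comp_continuousOn hf) fun x hx => ?_
  have hderiv : deriv (fun y => √(f y)) =ᶠ[𝓝 x] fun y => f' y / (2 * √(f y)) := by
    filter_upwards [isOpen_interior.mem_nhds hx] with y hy
    exact ((hf' y hy).sqrt (hpos y hy).ne').deriv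
  have hq : 0 < √(f x) := sqrt_pos.2 (hpos x hx)
  have hderiv2 := (hf'' x hx).fun_div (((hf' x hx).sqrt (hpos x hx).ne').const_mul 2)
    (by positivity)
  change deriv (deriv _) x < 0
  rw [hderiv.deriv_eq, hderiv2.deriv]
  have hnum : f'' x * (2 * √(f x)) - f' x * (2 * (f' x / (2 * √(f x))))
      = (2 * f x * f'' x - f' x ^ 2) / √(f x) := by
    field_simp
    rw [sq_sqrt (hpos x hx).le]
  rw [hnum]
  exact div_neg_of_neg_of_pos (div_neg_of_neg_of_pos (by linarith [hdefect x hx]) hq)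
    (by positivity)

theorem pos_on_Ico_of_hasDerivAt_neg {a b : ℝ} {f f' : ℝ → ℝ}
    (hf : ∀ x ∈ Icc a b, HasDerivAt f (f' x) x) (hf' : ∀ x ∈ Ioo a b, f' x < 0) (hb : f b = 0)
    {x : ℝ} (hx : x ∈ Ico a b) : 0 < f x := by
  have hanti : StrictAntiOn f (Icc a b) := by
    refine strictAntiOn_of_deriv_neg (convex_Icc a b)
      (fun y hy => (hf y hy).continuousAt.continuousWithinAt) fun y hy => ?_
    rw [interior_Icc] at hy
    rw [(hf y (Ioo_subset_Icc_self hy)).deriv]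
    exact hf' y hy
  have := hanti (Ico_subset_Icc_self hx) (right_mem_Icc.2 (hx.1.trans hx.2.le)) hx.2
  rwa [hb] at this

def Ralpha (α s : ℝ) : ℝ := √(calpha α ^ 2 + 1 - s ^ 2)

def galpha' (α s : ℝ) : ℝ := -2 * s + (2 * α / π) * arctan (s / Ralpha α s)

def galpha'' (α s : ℝ) : ℝ := -2 + (2 * α / π) / Ralpha α s

def galpha''' (α s : ℝ) : ℝ := (2 * α / π) * s / Ralpha α s ^ 3

def galphaDefect (α s : ℝ) : ℝ := galpha' α s ^ 2 - 2 * galpha α s * galpha'' α s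

theorem ralpha_add_calpha (α s : ℝ) : ralpha α s + calpha α = Ralpha α s :=
  sub_add_cancel _ _

theorem galpha_eq (α : ℝ) : galpha α = fun x =>
    -1 - x ^ 2 + (2 * α / π) * (Ralpha α x - calpha α)
      + (2 * α * x / π) * arctan (x / Ralpha α x) := by
  funext x
  rw [galpha, ralpha_add_calpha]
  rfl

theorem galpha'_zero (α : ℝ) : galpha' α 0 = 0 := by
  simp [galpha']

section Derivatives

variable {α s : ℝ}

theorem Ralpha_pos (hs : s ^ 2 < calpha α ^ 2 + 1) : 0 < Ralpha α s :=
  sqrt_pos.2 (by linarith)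

theorem hasDerivAt_Ralpha (hs : s ^ 2 < calpha α ^ 2 + 1) :
    HasDerivAt (Ralpha α) (-s / Ralpha α s) s := by
  have h := ((hasDerivAt_pow 2 s).const_sub (calpha α ^ 2 + 1)).sqrt (by linarith)
  refine h.congr_deriv ?_
  unfold Ralpha
  field_simp
  ring

theorem hasDerivAt_arctan_div_Ralpha (hs : s ^ 2 < calpha α ^ 2 + 1) :
    HasDerivAt (fun x => arctan (x / Ralpha α x)) (1 / Ralpha α s) s := by
  have hR := Ralpha_pos hs
  refine (((hasDerivAt_id' s).fun_div (hasDerivAt_Ralpha hs) hR.ne').arctan).congr_deriv ?_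
  field_simp
  ring

theorem hasDerivAt_galpha (hs : s ^ 2 < calpha α ^ 2 + 1) :
    HasDerivAt (galpha α) (galpha' α s) s := by
  rw [galpha_eq]
  have h := ((((hasDerivAt_pow 2 s).const_sub (-1)).add
    (((hasDerivAt_Ralpha hs).sub_const (calpha α)).const_mul (2 * α / π))).add
    ((((hasDerivAt_id' s).const_mul (2 * α)).div_const π).mul (hasDerivAt_arctan_div_Ralpha hs)))
  refine h.congr_deriv ?_
  unfold galpha'
  field_simp
  ring

theorem hasDerivAt_galpha' (hs : s ^ 2 < calpha α ^ 2 + 1) :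
    HasDerivAt (galpha' α) (galpha'' α s) s := by
  refine (((hasDerivAt_id' s).const_mul (-2)).add
    ((hasDerivAt_arctan_div_Ralpha hs).const_mul (2 * α / π))).congr_deriv ?_
  unfold galpha''
  ring

theorem hasDerivAt_galpha'' (hs : s ^ 2 < calpha α ^ 2 + 1) :
    HasDerivAt (galpha'' α) (galpha''' α s) s := by
  have hR := Ralpha_pos hs
  have h := (((hasDerivAt_Ralpha hs).fun_inv hR.ne').const_mul (2 * α / π)).const_add (-2)
  simp only [← div_eq_mul_inv] at h
  refine h.congr_deriv ?_
  unfold galpha'''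
  field_simp

theorem hasDerivAt_galphaDefect (hs : s ^ 2 < calpha α ^ 2 + 1) :
    HasDerivAt (galphaDefect α) (-2 * galpha α s * galpha''' α s) s := by
  refine (((hasDerivAt_galpha' hs).fun_pow 2).sub
    (((hasDerivAt_galpha hs).const_mul 2).fun_mul (hasDerivAt_galpha'' hs))).congr_deriv ?_
  ring

end Derivatives

section Shape

variable {α : ℝ}

theorem calpha_pos (hα : 2 < α) : 0 < calpha α := by
  have hπα : π / α < π / 2 := div_lt_div_of_pos_left pi_pos two_pos hα
  have := tan_pos_of_pos_of_lt_pi_div_two (by positivity) hπα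
  unfold calpha
  positivity

theorem arctan_inv_calpha (hα : 2 < α) : arctan (1 / calpha α) = π / α := by
  have hπα : 0 < π / α := div_pos pi_pos (by linarith)
  rw [calpha, one_div_one_div, arctan_tan (by linarith [pi_pos])
    (div_lt_div_of_pos_left pi_pos two_pos hα)]

theorem sq_lt_calpha_sq_add_one (hα : 2 < α) {s : ℝ} (hs : s ∈ Icc (0 : ℝ) 1) :
    s ^ 2 < calpha α ^ 2 + 1 := by
  nlinarith [calpha_pos hα, hs.1, hs.2]

theorem Ralpha_one (hα : 2 < α) : Ralpha α 1 = calpha α := by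
  rw [Ralpha, one_pow, add_sub_cancel_right, sqrt_sq (calpha_pos hα).le]

theorem galpha_one (hα : 2 < α) : galpha α 1 = 0 := by
  rw [galpha_eq]
  simp only [Ralpha_one hα, sub_self, arctan_inv_calpha hα]
  field_simp
  ring

theorem galpha'_one (hα : 2 < α) : galpha' α 1 = 0 := by
  rw [galpha', Ralpha_one hα, arctan_inv_calpha hα]
  field_simp
  ring

theorem galphaDefect_one (hα : 2 < α) : galphaDefect α 1 = 0 := by
  rw [galphaDefect, galpha'_one hα, galpha_one hα]
  ring

theorem galpha'''_pos (hα : 0 < α) {s : ℝ} (hs₀ : 0 < s) (hs : s ^ 2 < calpha α ^ 2 + 1) :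
    0 < galpha''' α s := by
  have := Ralpha_pos hs
  unfold galpha'''
  positivity

theorem strictConvexOn_galpha' (hα : 2 < α) : StrictConvexOn ℝ (Icc 0 1) (galpha' α) := by
  have hcont : ContinuousOn (galpha' α) (Icc 0 1) := fun s hs =>
    (hasDerivAt_galpha' (sq_lt_calpha_sq_add_one hα hs)).continuousAt.continuousWithinAt
  refine strictConvexOn_of_deriv2_pos (convex_Icc 0 1) hcont fun s hs => ?_
  rw [interior_Icc] at hs
  have hs' := sq_lt_calpha_sq_add_one hα (Ioo_subset_Icc_self hs)
  have hderiv : deriv (galpha' α) =ᶠ[𝓝 s] galpha'' α := by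
    filter_upwards [isOpen_Ioo.mem_nhds hs] with x hx
    exact (hasDerivAt_galpha' (sq_lt_calpha_sq_add_one hα (Ioo_subset_Icc_self hx))).deriv
  change 0 < deriv (deriv _) s
  rw [hderiv.deriv_eq, (hasDerivAt_galpha'' hs').deriv]
  exact galpha'''_pos (by linarith) hs.1 hs'

theorem galpha'_neg (hα : 2 < α) {s : ℝ} (hs : s ∈ Ioo (0 : ℝ) 1) : galpha' α s < 0 := by
  have h := (strictConvexOn_galpha' hα).lt_on_openSegment (left_mem_Icc.2 zero_le_one)
    (right_mem_Icc.2 zero_le_one) zero_ne_one (by rwa [openSegment_eq_Ioo zero_lt_one])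
  rwa [galpha'_zero, galpha'_one hα, max_self] at h

theorem galpha_pos (hα : 2 < α) {s : ℝ} (hs : s ∈ Ico (0 : ℝ) 1) : 0 < galpha α s :=
  pos_on_Ico_of_hasDerivAt_neg (fun _ hx => hasDerivAt_galpha (sq_lt_calpha_sq_add_one hα hx))
    (fun _ hx => galpha'_neg hα hx) (galpha_one hα) hs

theorem galpha_nonneg (hα : 2 < α) {s : ℝ} (hs : s ∈ Icc (0 : ℝ) 1) : 0 ≤ galpha α s := by
  rcases hs.2.eq_or_lt with rfl | h
  · exact (galpha_one hα).ge
  · exact (galpha_pos hα ⟨hs.1, h⟩).le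

theorem galphaDefect_pos (hα : 2 < α) {s : ℝ} (hs : s ∈ Ico (0 : ℝ) 1) :
    0 < galphaDefect α s := by
  refine pos_on_Ico_of_hasDerivAt_neg
    (fun _ hx => hasDerivAt_galphaDefect (sq_lt_calpha_sq_add_one hα hx))
    (fun x hx => ?_) (galphaDefect_one hα) hs
  have hg := galpha_pos hα (Ioo_subset_Ico_self hx)
  have hg''' := galpha'''_pos (by linarith) hx.1
    (sq_lt_calpha_sq_add_one hα (Ioo_subset_Icc_self hx))
  nlinarith

theorem strictConcaveOn_sqrt_galpha (hα : 2 < α) :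
    StrictConcaveOn ℝ (Icc 0 1) fun s => √(galpha α s) := by
  have hcont : ContinuousOn (galpha α) (Icc 0 1) := fun s hs =>
    (hasDerivAt_galpha (sq_lt_calpha_sq_add_one hα hs)).continuousAt.continuousWithinAt
  refine strictConcaveOn_sqrt_of_hasDerivAt (f' := galpha' α) (f'' := galpha'' α)
    (convex_Icc 0 1) hcont ?_ ?_ ?_ ?_ <;> rw [interior_Icc] <;> intro s hs
  · exact hasDerivAt_galpha (sq_lt_calpha_sq_add_one hα (Ioo_subset_Icc_self hs))
  · exact hasDerivAt_galpha' (sq_lt_calpha_sq_add_one hα (Ioo_subset_Icc_self hs))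
  · exact galpha_pos hα (Ioo_subset_Ico_self hs)
  · exact sub_pos.1 (galphaDefect_pos hα (Ioo_subset_Ico_self hs))

end Shape

/-- **Lemma.** For `α > 2`: `g_α ≥ 0` on `[0,1]`, `s ↦ √(g_α(s))` is strictly concave on
`[0,1]`, and so is `s ↦ a s + b √(g_α(s))` for any `a ∈ ℝ`, `b > 0`. -/
theorem stmt13 (α : ℝ) (hα : 2 < α) :
    (∀ s ∈ Set.Icc (0 : ℝ) 1, 0 ≤ galpha α s) ∧
    StrictConcaveOn ℝ (Set.Icc (0 : ℝ) 1) (fun s => Real.sqrt (galpha α s)) ∧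
    (∀ a b : ℝ, 0 < b →
      StrictConcaveOn ℝ (Set.Icc (0 : ℝ) 1)
        (fun s => a * s + b * Real.sqrt (galpha α s))) := by
  refine ⟨fun s hs => galpha_nonneg hα hs, strictConcaveOn_sqrt_galpha hα, fun a b hb => ?_⟩
  exact ((LinearMap.mul ℝ ℝ a).concaveOn (convex_Icc 0 1)).add_strictConcaveOn
    ((strictConcaveOn_sqrt_galpha hα).const_mul hb)
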